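/- Let (Z, Z_ρ) be a centered bivariate Gaussian vector with Var(Z) = Var(Z_ρ) = 1 and E[Z·Z_ρ] = ρ ∈ (-1,1). Then for every t > 0, P(Z > t and Z_ρ > t) ≤ ((1+ρ)²/(2π·t²·√(1-ρ²)))·exp(-t²/(1+ρ)). -/

import Mathlib

open Real MeasureTheory

/-- The standard bivariate normal density with correlation ρ. -/
noncomputable def bivNormalDensity (ρ : ℝ) (q : ℝ × ℝ) : ℝ :=
  (1 / (2 * π * Real.sqrt (1 - ρ ^ 2))) *
    Real.exp (-(q.1 ^ 2 - 2 * ρ * q.1 * q.2 + q.2 ^ 2) / (2 * (1 - ρ ^ 2)))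

/-- The law of a centered bivariate Gaussian vector with unit variances and correlation ρ. -/
noncomputable def bivNormal (ρ : ℝ) : Measure (ℝ × ℝ) :=
  (volume : Measure (ℝ × ℝ)).withDensity (fun q => ENNReal.ofReal (bivNormalDensity ρ q))

open Set

/-!
The quadratic form `x² - 2ρxy + y²` in the exponent of the density is convex, so it lies above
its tangent plane at `(t, t)`. On the quadrant `t < x, t < y` this bounds the density by a
constant times `exp (-c x) * exp (-c y)` with `c = t / (1 + ρ)`, whose integral over the quadrant
is `(exp (-c t) / c)²`.
-/

lemma tangent_le_quadForm {ρ : ℝ} (hρ : ρ ^ 2 ≤ 1) (t x y : ℝ) :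
    2 * (1 - ρ) * t * (x + y) - 2 * (1 - ρ) * t ^ 2 ≤ x ^ 2 - 2 * ρ * x * y + y ^ 2 := by
  -- with `u = x - t`, `v = y - t` the gap is `(u - ρ v)² + (1 - ρ²) v²`
  nlinarith [sq_nonneg (x - t - ρ * (y - t)), mul_nonneg (sub_nonneg.2 hρ) (sq_nonneg (y - t))]

lemma bivNormalDensity_le_exp_mul_exp {ρ : ℝ} (hρ1 : -1 < ρ) (hρ2 : ρ < 1) (t : ℝ)
    (q : ℝ × ℝ) :
    bivNormalDensity ρ q ≤ 1 / (2 * π * √(1 - ρ ^ 2)) * exp (t ^ 2 / (1 + ρ)) *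
      (exp (-(t / (1 + ρ)) * q.1) * exp (-(t / (1 + ρ)) * q.2)) := by
  have h1ρ : 0 < 1 + ρ := by linarith
  have hρsq : 0 < 1 - ρ ^ 2 := by nlinarith
  simp only [bivNormalDensity, mul_assoc, ← exp_add]
  gcongr
  rw [div_le_iff₀ (by positivity)]
  have := tangent_le_quadForm (by nlinarith : ρ ^ 2 ≤ 1) t q.1 q.2
  have hR : (t ^ 2 / (1 + ρ) + (-(t / (1 + ρ)) * q.1 + -(t / (1 + ρ)) * q.2)) *
      (2 * (1 - ρ ^ 2)) = 2 * (1 - ρ) * t ^ 2 - 2 * (1 - ρ) * t * (q.1 + q.2) := by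
    field_simp; ring
  linarith

lemma withDensity_ofReal_apply_le {α : Type*} [MeasurableSpace α] {μ : Measure α}
    {f g : α → ℝ} {s : Set α} (hs : MeasurableSet s) (hf : ∀ x ∈ s, 0 ≤ f x)
    (hfg : ∀ x ∈ s, f x ≤ g x) (hg : IntegrableOn g s μ) :
    μ.withDensity (fun x => ENNReal.ofReal (f x)) s ≤
      ENNReal.ofReal (∫ x in s, g x ∂μ) := by
  rw [withDensity_apply _ hs, ofReal_integral_eq_lintegral_ofReal hg
    ((ae_restrict_iff' hs).2 (.of_forall fun x hx => (hf x hx).trans (hfg x hx)))]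
  exact setLIntegral_mono_ae' hs (.of_forall fun x hx => ENNReal.ofReal_le_ofReal (hfg x hx))

lemma integrableOn_exp_mul_exp_Ioi_prod {c : ℝ} (hc : 0 < c) (a b : ℝ) :
    IntegrableOn (fun q : ℝ × ℝ => exp (-c * q.1) * exp (-c * q.2)) (Ioi a ×ˢ Ioi b) := by
  rw [IntegrableOn, Measure.volume_eq_prod, ← Measure.prod_restrict]
  exact (integrableOn_exp_mul_Ioi (neg_neg_of_pos hc) a).mul_prod
    (integrableOn_exp_mul_Ioi (neg_neg_of_pos hc) b)

lemma integral_exp_mul_exp_Ioi_prod {c : ℝ} (hc : 0 < c) (a b : ℝ) :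
    ∫ q in Ioi a ×ˢ Ioi b, exp (-c * q.1) * exp (-c * q.2) =
      exp (-c * a) / c * (exp (-c * b) / c) := by
  rw [Measure.volume_eq_prod,
    setIntegral_prod_mul (fun x => exp (-c * x)) (fun y => exp (-c * y)),
    integral_exp_mul_Ioi (neg_neg_of_pos hc), integral_exp_mul_Ioi (neg_neg_of_pos hc),
    neg_div_neg_eq, neg_div_neg_eq]

theorem bivariate_gaussian_tail (ρ : ℝ) (hρ1 : -1 < ρ) (hρ2 : ρ < 1) (t : ℝ) (ht : 0 < t) :
    (bivNormal ρ {q : ℝ × ℝ | t < q.1 ∧ t < q.2}).toReal ≤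
      ((1 + ρ) ^ 2 / (2 * π * t ^ 2 * Real.sqrt (1 - ρ ^ 2))) *
        Real.exp (-t ^ 2 / (1 + ρ)) := by
  have h1ρ : 0 < 1 + ρ := by linarith
  have hc : 0 < t / (1 + ρ) := div_pos ht h1ρ
  have hquadrant : {q : ℝ × ℝ | t < q.1 ∧ t < q.2} = Ioi t ×ˢ Ioi t := rfl
  have hmeasure := withDensity_ofReal_apply_le (μ := volume)
    (measurableSet_Ioi.prod measurableSet_Ioi)
    (fun q _ => by unfold bivNormalDensity; positivity)
    (fun q _ => bivNormalDensity_le_exp_mul_exp hρ1 hρ2 t q)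
    ((integrableOn_exp_mul_exp_Ioi_prod hc t t).const_mul _)
  rw [integral_const_mul, integral_exp_mul_exp_Ioi_prod hc, ← hquadrant] at hmeasure
  refine (ENNReal.toReal_le_of_le_ofReal (by positivity) hmeasure).trans_eq ?_
  have hexp : exp (t ^ 2 / (1 + ρ)) * (exp (-(t / (1 + ρ)) * t) * exp (-(t / (1 + ρ)) * t)) =
      exp (-t ^ 2 / (1 + ρ)) := by
    rw [← exp_add, ← exp_add]; congr 1; ring
  calc _ = 1 / (2 * π * √(1 - ρ ^ 2)) *
        (exp (t ^ 2 / (1 + ρ)) * (exp (-(t / (1 + ρ)) * t) * exp (-(t / (1 + ρ)) * t))) /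
          (t / (1 + ρ)) ^ 2 := by ring
    _ = _ := by rw [hexp]; field_simp
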